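/- Let J_1, J_2, J_3 ⊆ [n] with J_1 ∩ J_3 = ∅, J_1 ∩ J_2 ≠ ∅, J_2 ∩ J_3 ≠ ∅, and let a_1 ≥ a_2 ≥ a_3 be positive integers. Set B_1 = J_1 ∩ J_2, B_2 = J_2 ∩ J_3, C_1 = J_1\J_2, C_2 = J_2\(J_1 ∪ J_3), C_3 = J_3\J_2. A monomial w with support in J_1 ∪ J_2 ∪ J_3, decomposed as w = w'_1 w'_2 w''_1 w''_2 w''_3 with supp(w'_t) ⊆ B_t and supp(w''_t) ⊆ C_t, is a minimal generator of I = m_{J_1}^{a_1} ∩ m_{J_2}^{a_2} ∩ m_{J_3}^{a_3} only if deg(w'_1) + deg(w''_1) = a_1 (with the other membership inequalities a_2 ≤ deg(w'_1)+deg(w'_2)+deg(w''_2) and a_3 ≤ deg(w'_2)+deg(w''_3) holding). -/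

import Mathlib

open MvPolynomial

/-- Total degree of an exponent vector. -/
def expDeg {n : ℕ} (m : Fin n →₀ ℕ) : ℕ := m.sum fun _ e => e

/-- A monomial ideal: an ideal generated by a set of monomials. -/
def IsMonomialIdeal {n : ℕ} {K : Type*} [Field K]
    (I : Ideal (MvPolynomial (Fin n) K)) : Prop :=
  ∃ A : Set (Fin n →₀ ℕ), I = Ideal.span ((fun m => (monomial m (1 : K))) '' A)

/-- `m` is (the exponent vector of) a minimal monomial generator of `I`. -/
def MinGen {n : ℕ} {K : Type*} [Field K]
    (I : Ideal (MvPolynomial (Fin n) K)) (m : Fin n →₀ ℕ) : Prop :=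
  (monomial m (1 : K)) ∈ I ∧
    ∀ m' : Fin n →₀ ℕ, m' ≤ m → m' ≠ m → (monomial m' (1 : K)) ∉ I

/-- The non-pure dual exchange property. -/
def NPDE {n : ℕ} {K : Type*} [Field K]
    (I : Ideal (MvPolynomial (Fin n) K)) : Prop :=
  ∀ u v : Fin n →₀ ℕ, MinGen I u → MinGen I v → expDeg u ≤ expDeg v →
    ∀ i : Fin n, v i < u i →
      ∃ j : Fin n, u j < v j ∧
        (monomial (v + Finsupp.single i 1 - Finsupp.single j 1) (1 : K)) ∈ I

/-- `I` has linear quotients. -/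
def HasLinearQuotients {n : ℕ} {K : Type*} [Field K]
    (I : Ideal (MvPolynomial (Fin n) K)) : Prop :=
  ∃ l : List (Fin n →₀ ℕ), l.Nodup ∧ (∀ m, MinGen I m ↔ m ∈ l) ∧
    ∀ k : Fin l.length, 0 < (k : ℕ) →
      ∃ V : Set (Fin n),
        Submodule.colon
          (Ideal.span ((fun m => (monomial m (1 : K))) '' {m | m ∈ l.take k}))
          (Ideal.span {monomial (l.get k) (1 : K)})
        = Ideal.span ((fun i => (X i : MvPolynomial (Fin n) K)) '' V)

/-- The monomial prime ideal generated by the variables with index in `J`. -/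
noncomputable def mIdeal {n : ℕ} (K : Type*) [Field K] (J : Set (Fin n)) :
    Ideal (MvPolynomial (Fin n) K) :=
  Ideal.span ((fun i => (X i : MvPolynomial (Fin n) K)) '' J)

/-- `I` is weakly polymatroidal with respect to the variable order
`x_{σ 0} > x_{σ 1} > ⋯`. -/
def WeaklyPolymatroidal {n : ℕ} {K : Type*} [Field K]
    (I : Ideal (MvPolynomial (Fin n) K)) (σ : Equiv.Perm (Fin n)) : Prop :=
  ∀ u v : Fin n →₀ ℕ, MinGen I u → MinGen I v →
    ∀ t : Fin n, (∀ k : Fin n, k < t → u (σ k) = v (σ k)) → v (σ t) < u (σ t) →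
      ∃ j : Fin n, t < j ∧ 0 < v (σ j) ∧
        (monomial (v + Finsupp.single (σ t) 1 - Finsupp.single (σ j) 1) (1 : K)) ∈ I

/-- `I` has a `d`-linear (finite free graded) resolution. -/
def HasLinearResolution {n : ℕ} {K : Type*} [Field K]
    (I : Ideal (MvPolynomial (Fin n) K)) (d : ℕ) : Prop :=
  ∃ (b : ℕ → ℕ) (g : Fin (b 0) → MvPolynomial (Fin n) K)
    (M : ∀ k : ℕ, Matrix (Fin (b k)) (Fin (b (k + 1))) (MvPolynomial (Fin n) K)),
    (∀ i, (g i).IsHomogeneous d) ∧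
    Ideal.span (Set.range g) = I ∧
    (∀ k i j, ((M k) i j).IsHomogeneous 1) ∧
    LinearMap.ker (Fintype.linearCombination (MvPolynomial (Fin n) K) g)
      = LinearMap.range (M 0).mulVecLin ∧
    ∀ k, LinearMap.ker (M k).mulVecLin = LinearMap.range (M (k + 1)).mulVecLin

/-- The ideal generated by the degree-`d` homogeneous elements of `I`. -/
noncomputable def componentIdeal {n : ℕ} {K : Type*} [Field K]
    (I : Ideal (MvPolynomial (Fin n) K)) (d : ℕ) :
    Ideal (MvPolynomial (Fin n) K) :=
  Ideal.span {f | f ∈ I ∧ f.IsHomogeneous d}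

/-- `I` is componentwise linear. -/
def ComponentwiseLinear {n : ℕ} {K : Type*} [Field K]
    (I : Ideal (MvPolynomial (Fin n) K)) : Prop :=
  ∀ d : ℕ, HasLinearResolution (componentIdeal I d) d

/-!
Membership of a monomial `x^w` in `m_J^a` means `a ≤ ∑_{i ∈ J} w_i`. If `x^w` is a minimal
generator of `I = m_{J₁}^{a₁} ∩ m_{J₂}^{a₂} ∩ m_{J₃}^{a₃}` and `x_i ∣ x^w`, then `x^w / x_i ∉ I`,
so some `J_t ∋ i` is tight: `∑_{J_t} w = a_t`. Suppose `∑_{J₁} w > a₁`. Every variable of `J₁`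
dividing `x^w` then has to be tight for `J₂` (it is not in `J₃`), so `w` vanishes on `J₁ \ J₂` and
`∑_{J₁} w ≤ ∑_{J₂} w = a₂ ≤ a₁`, a contradiction.
-/

namespace Finsupp

variable {σ : Type*}

lemma sum_single_apply_of_mem {M : Type*} [AddCommMonoid M] {J : Finset σ} {i : σ} (hi : i ∈ J)
    (b : M) : ∑ j ∈ J, single i b j = b := by
  classical
  simp [single_apply, hi]

lemma sum_tsub_single_add_one_of_mem {J : Finset σ} {w : σ →₀ ℕ} {i : σ} (hi : i ∈ J)
    (hwi : 0 < w i) : ∑ j ∈ J, (w - single i 1 : σ →₀ ℕ) j + 1 = ∑ j ∈ J, w j := by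
  have hle : single i 1 ≤ w := single_le_iff.mpr hwi
  calc ∑ j ∈ J, (w - single i 1 : σ →₀ ℕ) j + 1
      = ∑ j ∈ J, ((w - single i 1 : σ →₀ ℕ) j + single i 1 j) := by
        rw [Finset.sum_add_distrib, sum_single_apply_of_mem hi]
    _ = ∑ j ∈ J, w j := by simp only [← add_apply, tsub_add_cancel_of_le hle]

lemma sum_tsub_single_of_notMem {J : Finset σ} {w : σ →₀ ℕ} {i : σ} (hi : i ∉ J) :
    ∑ j ∈ J, (w - single i 1 : σ →₀ ℕ) j = ∑ j ∈ J, w j :=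
  Finset.sum_congr rfl fun j hj => by
    simp [single_eq_of_ne (show j ≠ i from fun h => hi (h ▸ hj))]

end Finsupp

section

open Finsupp

variable {n : ℕ} {K : Type*} [Field K]

lemma isUpperSet_setOf_le_sum (J : Finset (Fin n)) (a : ℕ) :
    IsUpperSet {m : Fin n →₀ ℕ | a ≤ ∑ i ∈ J, m i} :=
  fun _ _ hle hm => hm.trans (Finset.sum_le_sum fun i _ => hle i)

lemma mIdeal_pow_le_restrictSupportIdeal (J : Finset (Fin n)) (a : ℕ) :
    mIdeal K ↑J ^ a ≤ restrictSupportIdeal K _ (isUpperSet_setOf_le_sum J a) := by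
  induction a with
  | zero => simp [Ideal.one_eq_top, SetLike.le_def, restrictSupportIdeal]
  | succ a ih =>
    have hvars : mIdeal K ↑J ≤ restrictSupportIdeal K _ (isUpperSet_setOf_le_sum J 1) := by
      rw [mIdeal, Ideal.span_le]
      rintro _ ⟨i, hi, rfl⟩
      show monomial _ 1 ∈ restrictSupport K _
      simp [sum_single_apply_of_mem (Finset.mem_coe.mp hi)]
    rw [pow_succ, Ideal.mul_le]
    intro r hr s hs
    have hrs := Submodule.mul_mem_mul (R := K) (ih hr) (hvars hs)
    rw [← restrictSupport_add] at hrs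
    refine restrictSupport_mono (R := K) ?_ hrs
    rintro _ ⟨m, hm, m', hm', rfl⟩
    simp only [Set.mem_ofPred_eq, Finsupp.coe_add, Pi.add_apply, Finset.sum_add_distrib] at hm hm' ⊢
    omega

lemma monomial_mem_mIdeal_pow_of_le_sum {J : Finset (Fin n)} {a : ℕ} {w : Fin n →₀ ℕ}
    (h : a ≤ ∑ i ∈ J, w i) : monomial w (1 : K) ∈ mIdeal K ↑J ^ a := by
  induction a generalizing w with
  | zero => simp
  | succ a ih =>
    obtain ⟨i, hi, hwi⟩ := Finset.exists_ne_zero_of_sum_ne_zero (by omega : ∑ i ∈ J, w i ≠ 0)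
    replace hwi : 0 < w i := Nat.pos_of_ne_zero hwi
    have hsplit : monomial w (1 : K) = monomial (w - single i 1) 1 * X i := by
      rw [X, monomial_mul, mul_one, tsub_add_cancel_of_le (single_le_iff.mpr hwi)]
    have hdeg := sum_tsub_single_add_one_of_mem hi hwi
    rw [hsplit, pow_succ]
    exact Ideal.mul_mem_mul (ih (by omega)) (Ideal.subset_span ⟨i, hi, rfl⟩)

theorem monomial_mem_mIdeal_pow_iff {J : Finset (Fin n)} {a : ℕ} {w : Fin n →₀ ℕ} :
    monomial w (1 : K) ∈ mIdeal K ↑J ^ a ↔ a ≤ ∑ i ∈ J, w i := by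
  refine ⟨fun h => ?_, monomial_mem_mIdeal_pow_of_le_sum⟩
  have : monomial w (1 : K) ∈ restrictSupport K _ := mIdeal_pow_le_restrictSupportIdeal J a h
  simpa using this

theorem MinGen.exists_mem_sum_eq {ι : Type*} {J : ι → Finset (Fin n)} {a : ι → ℕ}
    {w : Fin n →₀ ℕ} (hw : MinGen (⨅ t, mIdeal K ↑(J t) ^ a t) w) {i : Fin n} (hi : 0 < w i) :
    ∃ t, i ∈ J t ∧ ∑ j ∈ J t, w j = a t := by
  by_contra! hslack
  have hmem := hw.1
  simp only [Submodule.mem_iInf, monomial_mem_mIdeal_pow_iff] at hmem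
  refine hw.2 (w - single i 1) tsub_le_self (fun h => ?_) ?_
  · have := DFunLike.congr_fun h i
    simp only [tsub_apply, single_eq_same] at this
    omega
  · simp only [Submodule.mem_iInf, monomial_mem_mIdeal_pow_iff]
    intro t
    by_cases hit : i ∈ J t
    · have hdrop := sum_tsub_single_add_one_of_mem hit hi
      have := hslack t hit
      have := hmem t
      omega
    · rw [sum_tsub_single_of_notMem hit]
      exact hmem t

lemma inf_inf_eq_iInf_fin_three (I₁ I₂ I₃ : Ideal (MvPolynomial (Fin n) K)) :
    I₁ ⊓ I₂ ⊓ I₃ = ⨅ t, ![I₁, I₂, I₃] t := by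
  ext; simp [Submodule.mem_iInf, Fin.forall_fin_succ, and_assoc]

theorem MinGen.sum_eq_of_inf {J1 J2 J3 : Finset (Fin n)} {a1 a2 a3 : ℕ} (h13 : J1 ∩ J3 = ∅)
    (h21 : a2 ≤ a1) {w : Fin n →₀ ℕ}
    (hw : MinGen (mIdeal K ↑J1 ^ a1 ⊓ mIdeal K ↑J2 ^ a2 ⊓ mIdeal K ↑J3 ^ a3) w) :
    ∑ i ∈ J1, w i = a1 := by
  have hw' : MinGen (⨅ t, mIdeal K ↑(![J1, J2, J3] t) ^ (![a1, a2, a3] t)) w := by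
    convert hw using 1
    rw [inf_inf_eq_iInf_fin_three]
    congr! 2 with t
    fin_cases t <;> rfl
  have hd1 : a1 ≤ ∑ i ∈ J1, w i := by
    have := hw.1
    simp only [Submodule.mem_inf, monomial_mem_mIdeal_pow_iff] at this
    exact this.1.1
  by_contra hne
  have htight : ∀ i ∈ J1, w i ≠ 0 → i ∈ J2 ∧ ∑ j ∈ J2, w j = a2 := fun i hi hwi => by
    obtain ⟨t, hit, ht⟩ := hw'.exists_mem_sum_eq (Nat.pos_of_ne_zero hwi)
    fin_cases t
    · exact absurd ht hne
    · exact ⟨hit, ht⟩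
    · exact absurd (Finset.mem_inter.mpr ⟨hi, hit⟩) (h13 ▸ Finset.notMem_empty i)
  obtain ⟨i, hi, hwi⟩ := Finset.exists_ne_zero_of_sum_ne_zero (by omega : ∑ i ∈ J1, w i ≠ 0)
  have hle : ∑ i ∈ J1, w i ≤ ∑ j ∈ J2, w j :=
    Finset.sum_le_sum_of_ne_zero fun j hj hwj => (htight j hj hwj).1
  have := (htight i hi hwi).2
  omega

end

theorem stmt16_general (K : Type*) [Field K] {n : ℕ} (J1 J2 J3 : Finset (Fin n))
    (h13 : J1 ∩ J3 = ∅)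
    (a1 a2 a3 : ℕ) (h21 : a2 ≤ a1)
    (w : Fin n →₀ ℕ)
    (hw : MinGen ((mIdeal K ↑J1) ^ a1 ⊓ (mIdeal K ↑J2) ^ a2 ⊓ (mIdeal K ↑J3) ^ a3) w) :
    ((∑ i ∈ J1 ∩ J2, w i) + ∑ i ∈ J1 \ J2, w i) = a1 ∧
    a2 ≤ (∑ i ∈ J1 ∩ J2, w i) + (∑ i ∈ J2 ∩ J3, w i) + ∑ i ∈ J2 \ (J1 ∪ J3), w i ∧
    a3 ≤ (∑ i ∈ J2 ∩ J3, w i) + ∑ i ∈ J3 \ J2, w i := by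
  have hmem := hw.1
  simp only [Submodule.mem_inf, monomial_mem_mIdeal_pow_iff] at hmem
  have hJ2 : (∑ i ∈ J1 ∩ J2, w i) + (∑ i ∈ J2 ∩ J3, w i) + ∑ i ∈ J2 \ (J1 ∪ J3), w i =
      ∑ i ∈ J2, w i := by
    have hdisj : Disjoint (J2 ∩ J1) (J2 ∩ J3) :=
      (Finset.disjoint_iff_inter_eq_empty.mpr h13).mono Finset.inter_subset_right
        Finset.inter_subset_right
    rw [← Finset.sum_inter_add_sum_sdiff J2 (J1 ∪ J3), Finset.inter_union_distrib_left,
      Finset.sum_union hdisj, Finset.inter_comm J2 J1]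
  refine ⟨?_, ?_, ?_⟩
  · rw [Finset.sum_inter_add_sum_sdiff]
    exact hw.sum_eq_of_inf h13 h21
  · exact hJ2 ▸ hmem.1.2
  · rw [Finset.inter_comm, Finset.sum_inter_add_sum_sdiff]
    exact hmem.2

theorem stmt16 (K : Type*) [Field K] {n : ℕ} (J1 J2 J3 : Finset (Fin n))
    (h13 : J1 ∩ J3 = ∅) (h12 : (J1 ∩ J2).Nonempty) (h23 : (J2 ∩ J3).Nonempty)
    (a1 a2 a3 : ℕ) (h3 : 0 < a3) (h32 : a3 ≤ a2) (h21 : a2 ≤ a1)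
    (w : Fin n →₀ ℕ)
    (hw : MinGen ((mIdeal K ↑J1) ^ a1 ⊓ (mIdeal K ↑J2) ^ a2 ⊓ (mIdeal K ↑J3) ^ a3) w)
    (hsupp : (↑w.support : Set (Fin n)) ⊆ ↑J1 ∪ ↑J2 ∪ ↑J3) :
    ((∑ i ∈ J1 ∩ J2, w i) + ∑ i ∈ J1 \ J2, w i) = a1 ∧
    a2 ≤ (∑ i ∈ J1 ∩ J2, w i) + (∑ i ∈ J2 ∩ J3, w i) + ∑ i ∈ J2 \ (J1 ∪ J3), w i ∧
    a3 ≤ (∑ i ∈ J2 ∩ J3, w i) + ∑ i ∈ J3 \ J2, w i :=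
  stmt16_general K J1 J2 J3 h13 a1 a2 a3 h21 w hw
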